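/- Let G : ℝ^d → ℝ be differentiable with an L-Lipschitz gradient on ℝ^d, let δ > 0, y ∈ ℝ^d, and K ≥ 1. Then, averaging over (r_1, …, r_K) uniform on ({−1, +1}^d)^K, E ‖(1/K) Σ_{k=1}^K ((G(y + δr_k) − G(y − δr_k))/(2δ)) · r_k − ∇G(y)‖² ≤ 2 · ((d − 1)/K) · ‖∇G(y)‖² + (L² δ² d³) / 2. -/

import Mathlib

/-!
For a sign vector `r`, write the one-direction error as `(⟪∇G y, r⟫ • r - ∇G y) + (q - ⟪∇G y, r⟫) • r`,
where `q` is the finite-difference quotient. Since `∑ r rᵀ = 2^d • I` over all sign vectors, the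
first part has mean zero and mean square `(d - 1)‖∇G y‖²`, so averaging `K` independent directions
divides it by `K`. By the descent lemma at `y ± δ r`, `|q - ⟪∇G y, r⟫| ≤ L δ d / 2`, so the second
part is a bias of norm at most `L δ d^{3/2} / 2`. Combine the two with
`‖u + v‖² ≤ 2‖u‖² + 2‖v‖²`.
-/

/-- The sign vector in `{-1,+1}^d ⊆ ℝ^d` encoded by a Boolean vector. -/
noncomputable def signVec (d : ℕ) (s : Fin d → Bool) : EuclideanSpace ℝ (Fin d) :=
  WithLp.toLp 2 (fun i => if s i then (1 : ℝ) else -1)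

open scoped RealInnerProductSpace
open Finset

section SignVectors

variable {d : ℕ}

lemma signVec_apply (s : Fin d → Bool) (i : Fin d) :
    signVec d s i = if s i then 1 else -1 := rfl

lemma signVec_mul_self (s : Fin d → Bool) (i : Fin d) : signVec d s i * signVec d s i = 1 := by
  rw [signVec_apply]; cases s i <;> norm_num

lemma card_fin_to_bool : (Fintype.card (Fin d → Bool) : ℝ) = 2 ^ d := by
  simp

lemma sum_signVec_mul_signVec (i j : Fin d) :
    ∑ s : Fin d → Bool, signVec d s i * signVec d s j = if i = j then 2 ^ d else 0 := by
  split_ifs with hij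
  · simp [hij, signVec_mul_self]
  -- flipping the `i`-th sign is a bijection that negates every summand
  have hflip : Function.Involutive fun s : Fin d → Bool => Function.update s i !(s i) := by
    intro s; simp
  have hneg := Fintype.sum_bijective _ hflip.bijective
    (fun s => signVec d s i * signVec d s j) (fun s => -(signVec d s i * signVec d s j))
    fun s => by
      simp only [signVec_apply, Function.update_self, Function.update_of_ne (Ne.symm hij)]
      cases s i <;> cases s j <;> norm_num
  rw [sum_neg_distrib] at hneg
  linarith

lemma inner_signVec (g : EuclideanSpace ℝ (Fin d)) (s : Fin d → Bool) :
    ⟪g, signVec d s⟫ = ∑ i, g i * signVec d s i := by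
  simp [PiLp.inner_apply, mul_comm]

lemma norm_signVec_sq (s : Fin d → Bool) : ‖signVec d s‖ ^ 2 = d := by
  rw [← real_inner_self_eq_norm_sq, inner_signVec]
  simp [signVec_mul_self]

lemma sum_inner_signVec_smul_signVec (g : EuclideanSpace ℝ (Fin d)) :
    ∑ s : Fin d → Bool, ⟪g, signVec d s⟫ • signVec d s = (2 ^ d : ℝ) • g := by
  refine PiLp.ext fun i => ?_
  calc (∑ s : Fin d → Bool, ⟪g, signVec d s⟫ • signVec d s) i
      = ∑ s : Fin d → Bool, ∑ j, g j * (signVec d s i * signVec d s j) := by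
        simp only [WithLp.ofLp_sum, Finset.sum_apply, PiLp.smul_apply, smul_eq_mul, inner_signVec,
          sum_mul]
        exact sum_congr rfl fun s _ => sum_congr rfl fun j _ => by ring
    _ = ∑ j, g j * ∑ s : Fin d → Bool, signVec d s i * signVec d s j := by
        rw [sum_comm]; simp only [mul_sum]
    _ = ((2 ^ d : ℝ) • g) i := by simp [sum_signVec_mul_signVec, mul_comm]

lemma sum_inner_signVec_sq (g : EuclideanSpace ℝ (Fin d)) :
    ∑ s : Fin d → Bool, ⟪g, signVec d s⟫ ^ 2 = 2 ^ d * ‖g‖ ^ 2 := by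
  have := congrArg (⟪g, ·⟫) (sum_inner_signVec_smul_signVec g)
  simpa [inner_sum, real_inner_smul_right, sq] using this

lemma sum_norm_inner_signVec_smul_signVec_sub_sq (g : EuclideanSpace ℝ (Fin d)) :
    ∑ s : Fin d → Bool, ‖⟪g, signVec d s⟫ • signVec d s - g‖ ^ 2 = 2 ^ d * (d - 1) * ‖g‖ ^ 2 := by
  have expand : ∀ s : Fin d → Bool, ‖⟪g, signVec d s⟫ • signVec d s - g‖ ^ 2 =
      (d - 2) * ⟪g, signVec d s⟫ ^ 2 + ‖g‖ ^ 2 := by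
    intro s
    rw [norm_sub_sq_real, norm_smul, mul_pow, Real.norm_eq_abs, sq_abs, norm_signVec_sq,
      real_inner_smul_left, real_inner_comm]
    ring
  simp only [expand, sum_add_distrib, ← mul_sum, sum_inner_signVec_sq, sum_const, card_univ,
    nsmul_eq_mul, card_fin_to_bool]
  ring

end SignVectors

section Sampling

variable {E : Type*} [NormedAddCommGroup E] [InnerProductSpace ℝ E] {S : Type*} [Fintype S]

lemma sum_pi_fin_succ {M : Type*} [AddCommMonoid M] {K : ℕ} (f : (Fin (K + 1) → S) → M) :
    ∑ t, f t = ∑ s, ∑ t : Fin K → S, f (Fin.cons s t) := by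
  rw [← (Fin.consEquiv fun _ => S).sum_comp, Fintype.sum_prod_type]
  rfl

/-- Cross terms between independent draws cancel because `Z` has mean zero. -/
lemma card_mul_sum_norm_sum_sq_of_sum_eq_zero (Z : S → E) (hZ : ∑ s, Z s = 0) (K : ℕ) :
    Fintype.card S * ∑ t : Fin K → S, ‖∑ k, Z (t k)‖ ^ 2 =
      K * Fintype.card S ^ K * ∑ s, ‖Z s‖ ^ 2 := by
  induction K with
  | zero => simp
  | succ K ih =>
    have hcross : ∀ t : Fin K → S, ∑ s, ⟪Z s, ∑ k, Z (t k)⟫ = 0 := fun t => by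
      rw [← sum_inner, hZ, inner_zero_left]
    simp only [sum_pi_fin_succ, Fin.sum_univ_succ, Fin.cons_zero, Fin.cons_succ, norm_add_sq_real]
    rw [sum_comm]
    simp only [sum_add_distrib, ← mul_sum, hcross, sum_const, card_univ, Fintype.card_fun,
      Fintype.card_fin, nsmul_eq_mul, mul_zero, add_zero]
    rw [mul_add, ih]
    push_cast
    ring

lemma norm_inv_smul_sum_le {K : ℕ} (hK : K ≠ 0) (x : Fin K → E) {c : ℝ} (hx : ∀ k, ‖x k‖ ≤ c) :
    ‖(K : ℝ)⁻¹ • ∑ k, x k‖ ≤ c := by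
  rw [norm_smul, norm_inv, RCLike.norm_natCast, inv_mul_le_iff₀ (by positivity)]
  calc ‖∑ k, x k‖ ≤ ∑ k, ‖x k‖ := norm_sum_le _ _
    _ ≤ ∑ _k : Fin K, c := sum_le_sum fun k _ => hx k
    _ = K * c := by simp

/-- `μ` is an unbiased proxy for the estimator `X` of `a`, and `c` bounds the bias `X - μ`. -/
lemma mean_sq_error_average_le [Nonempty S] (X μ : S → E) (a : E)
    (hμ : ∑ s, μ s = Fintype.card S • a) {c : ℝ} (hX : ∀ s, ‖X s - μ s‖ ≤ c) {K : ℕ} (hK : K ≠ 0) :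
    (Fintype.card S ^ K : ℝ)⁻¹ * ∑ t : Fin K → S, ‖(K : ℝ)⁻¹ • ∑ k, X (t k) - a‖ ^ 2 ≤
      2 * ((∑ s, ‖μ s - a‖ ^ 2) / (K * Fintype.card S)) + 2 * c ^ 2 := by
  have hS : (Fintype.card S : ℝ) ≠ 0 := by positivity
  have hKR : (K : ℝ) ≠ 0 := by exact_mod_cast hK
  have hsplit : ∀ t : Fin K → S, (K : ℝ)⁻¹ • ∑ k, X (t k) - a =
      (K : ℝ)⁻¹ • ∑ k, (μ (t k) - a) + (K : ℝ)⁻¹ • ∑ k, (X (t k) - μ (t k)) := by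
    intro t
    rw [← smul_add, ← sum_add_distrib]
    simp only [sub_add_sub_cancel', sum_sub_distrib, sum_const, card_univ, Fintype.card_fin,
      smul_sub, ← Nat.cast_smul_eq_nsmul ℝ, smul_smul, inv_mul_cancel₀ hKR, one_smul]
  have hpoint : ∀ t : Fin K → S, ‖(K : ℝ)⁻¹ • ∑ k, X (t k) - a‖ ^ 2 ≤
      2 * ((K : ℝ)⁻¹ ^ 2 * ‖∑ k, (μ (t k) - a)‖ ^ 2) + 2 * c ^ 2 := by
    intro t
    have hbias := norm_inv_smul_sum_le hK _ fun k => hX (t k)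
    rw [hsplit]
    calc _ ≤ (‖(K : ℝ)⁻¹ • ∑ k, (μ (t k) - a)‖ + ‖(K : ℝ)⁻¹ • ∑ k, (X (t k) - μ (t k))‖) ^ 2 :=
          pow_le_pow_left₀ (norm_nonneg _) (norm_add_le _ _) 2
      _ ≤ 2 * (‖(K : ℝ)⁻¹ • ∑ k, (μ (t k) - a)‖ ^ 2 + ‖(K : ℝ)⁻¹ • ∑ k, (X (t k) - μ (t k))‖ ^ 2) :=
          add_sq_le
      _ ≤ _ := by
        rw [norm_smul (K : ℝ)⁻¹ (∑ k, (μ (t k) - a)), mul_pow, norm_inv, RCLike.norm_natCast]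
        nlinarith [pow_le_pow_left₀ (norm_nonneg _) hbias 2]
  have hvar : ∑ t : Fin K → S, ‖∑ k, (μ (t k) - a)‖ ^ 2 =
      K * Fintype.card S ^ K * (∑ s, ‖μ s - a‖ ^ 2) / Fintype.card S := by
    rw [← card_mul_sum_norm_sum_sq_of_sum_eq_zero (fun s => μ s - a)
      (by rw [sum_sub_distrib, hμ, sum_const, card_univ, sub_self]) K]
    field_simp
  calc _ ≤ (Fintype.card S ^ K : ℝ)⁻¹ * ∑ t : Fin K → S,
        (2 * ((K : ℝ)⁻¹ ^ 2 * ‖∑ k, (μ (t k) - a)‖ ^ 2) + 2 * c ^ 2) :=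
        mul_le_mul_of_nonneg_left (sum_le_sum fun t _ => hpoint t) (by positivity)
    _ = _ := by
        rw [sum_add_distrib, ← mul_sum, ← mul_sum, sum_const, card_univ, Fintype.card_fun,
          Fintype.card_fin, nsmul_eq_mul, hvar]
        push_cast
        field_simp

end Sampling

section Smoothing

lemma norm_le_half_mul_sq_of_norm_deriv_le {F : Type*} [NormedAddCommGroup F] [NormedSpace ℝ F]
    {f f' : ℝ → F} {C x : ℝ} (hf : ∀ t, HasDerivAt f (f' t) t) (hf0 : f 0 = 0)
    (hbound : ∀ t ∈ Set.Ico 0 x, ‖f' t‖ ≤ C * t) (hx : 0 ≤ x) : ‖f x‖ ≤ C / 2 * x ^ 2 :=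
  image_norm_le_of_norm_deriv_right_le_deriv_boundary
    (fun t _ => (hf t).continuousAt.continuousWithinAt) (fun t _ => (hf t).hasDerivWithinAt)
    (by simp [hf0])
    (fun t => ((hasDerivAt_pow 2 t).const_mul (C / 2)).congr_deriv (by push_cast; ring))
    hbound ⟨hx, le_rfl⟩

variable {E : Type*} [NormedAddCommGroup E] [InnerProductSpace ℝ E] [CompleteSpace E]
  {G : E → ℝ} {L : ℝ}

lemma hasDerivAt_comp_add_smul (hG : Differentiable ℝ G) (y v : E) (t : ℝ) :
    HasDerivAt (fun t : ℝ => G (y + t • v)) ⟪gradient G (y + t • v), v⟫ t := by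
  have hline : HasDerivAt (fun t : ℝ => y + t • v) v t := by
    simpa using ((hasDerivAt_id t).smul_const v).const_add y
  rw [inner_gradient_left]
  exact (hG (y + t • v)).hasFDerivAt.comp_hasDerivAt t hline

lemma abs_sub_sub_inner_gradient_le (hG : Differentiable ℝ G)
    (hlip : ∀ a b, ‖gradient G a - gradient G b‖ ≤ L * ‖a - b‖) (y v : E) :
    |G (y + v) - G y - ⟪gradient G y, v⟫| ≤ L * ‖v‖ ^ 2 / 2 := by
  have hderiv : ∀ t : ℝ, HasDerivAt (fun t : ℝ => G (y + t • v) - G y - t * ⟪gradient G y, v⟫)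
      ⟪gradient G (y + t • v) - gradient G y, v⟫ t := fun t => by
    rw [inner_sub_left]
    exact ((hasDerivAt_comp_add_smul hG y v t).sub_const (G y)).sub
      (((hasDerivAt_id t).mul_const _).congr_deriv (one_mul _))
  have hbound : ∀ t ∈ Set.Ico (0 : ℝ) 1,
      ‖⟪gradient G (y + t • v) - gradient G y, v⟫‖ ≤ L * ‖v‖ ^ 2 * t := fun t ht => by
    calc _ ≤ ‖gradient G (y + t • v) - gradient G y‖ * ‖v‖ := norm_inner_le_norm _ _
      _ ≤ L * ‖t • v‖ * ‖v‖ := by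
          gcongr; simpa using hlip (y + t • v) y
      _ = _ := by rw [norm_smul, Real.norm_of_nonneg ht.1]; ring
  simpa using norm_le_half_mul_sq_of_norm_deriv_le hderiv (by simp) hbound zero_le_one

lemma abs_sub_sub_two_inner_gradient_le (hG : Differentiable ℝ G)
    (hlip : ∀ a b, ‖gradient G a - gradient G b‖ ≤ L * ‖a - b‖) (y h : E) :
    |G (y + h) - G (y - h) - 2 * ⟪gradient G y, h⟫| ≤ L * ‖h‖ ^ 2 := by
  have hplus := abs_sub_sub_inner_gradient_le hG hlip y h
  have hminus := abs_sub_sub_inner_gradient_le hG hlip y (-h)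
  rw [← sub_eq_add_neg, inner_neg_right, norm_neg] at hminus
  rw [abs_le] at hplus hminus ⊢
  constructor <;> linarith [hplus.1, hplus.2, hminus.1, hminus.2]

lemma abs_finite_difference_sub_inner_gradient_le (hG : Differentiable ℝ G)
    (hlip : ∀ a b, ‖gradient G a - gradient G b‖ ≤ L * ‖a - b‖) (y r : E) {δ : ℝ} (hδ : 0 < δ) :
    |(G (y + δ • r) - G (y - δ • r)) / (2 * δ) - ⟪gradient G y, r⟫| ≤ L * δ * ‖r‖ ^ 2 / 2 := by
  have h := abs_sub_sub_two_inner_gradient_le hG hlip y (δ • r)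
  rw [real_inner_smul_right, norm_smul, Real.norm_of_nonneg hδ.le] at h
  have h2δ : 0 < 2 * δ := by positivity
  have hquot : (G (y + δ • r) - G (y - δ • r)) / (2 * δ) - ⟪gradient G y, r⟫ =
      (G (y + δ • r) - G (y - δ • r) - 2 * (δ * ⟪gradient G y, r⟫)) / (2 * δ) := by
    field_simp
  rw [hquot, abs_div, abs_of_pos h2δ, div_le_iff₀ h2δ]
  calc _ ≤ L * (δ * ‖r‖) ^ 2 := h
    _ = _ := by ring

end Smoothing

/-- **Continuous Rademacher finite-difference error budget.**
If `G` has an `L`-Lipschitz gradient on `ℝ^d`, then the uniform average over all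
`2^{dK}` tuples of `K` Rademacher directions of the squared error of the
`K`-direction two-point estimator with radius `δ` is at most
`2((d-1)/K)‖∇G(y)‖² + L²δ²d³/2`. -/
theorem stmt_11 (d K : ℕ) (hK : 1 ≤ K) (G : EuclideanSpace ℝ (Fin d) → ℝ)
    (L δ : ℝ) (hδ : 0 < δ) (hdiff : Differentiable ℝ G)
    (hlip : ∀ a b, ‖gradient G a - gradient G b‖ ≤ L * ‖a - b‖)
    (y : EuclideanSpace ℝ (Fin d)) :
    ((2 : ℝ) ^ (d * K))⁻¹ *
        ∑ t : Fin K → Fin d → Bool,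
          ‖(K : ℝ)⁻¹ •
              (∑ k : Fin K,
                ((G (y + δ • signVec d (t k)) - G (y - δ • signVec d (t k))) /
                    (2 * δ)) • signVec d (t k)) -
            gradient G y‖ ^ 2 ≤
      2 * (((d : ℝ) - 1) / (K : ℝ)) * ‖gradient G y‖ ^ 2 +
        L ^ 2 * δ ^ 2 * (d : ℝ) ^ 3 / 2 := by
  set g := gradient G y
  have hbias : ∀ s : Fin d → Bool,
      ‖((G (y + δ • signVec d s) - G (y - δ • signVec d s)) / (2 * δ)) • signVec d s -
        ⟪g, signVec d s⟫ • signVec d s‖ ≤ L * δ * d / 2 * √d := fun s => by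
    have hfd := abs_finite_difference_sub_inner_gradient_le hdiff hlip y (signVec d s) hδ
    rw [← sub_smul, norm_smul, Real.norm_eq_abs, ← Real.sqrt_sq (norm_nonneg (signVec d s)),
      norm_signVec_sq]
    rw [norm_signVec_sq] at hfd
    gcongr
  have hbudget := mean_sq_error_average_le _ (fun s => ⟪g, signVec d s⟫ • signVec d s) g
    (by rw [sum_inner_signVec_smul_signVec, ← Nat.cast_smul_eq_nsmul ℝ, card_fin_to_bool]) hbias
    (by omega : K ≠ 0)
  rw [card_fin_to_bool, ← pow_mul, sum_norm_inner_signVec_smul_signVec_sub_sq] at hbudget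
  refine hbudget.trans (le_of_eq ?_)
  rw [mul_pow, Real.sq_sqrt (Nat.cast_nonneg d)]
  field_simp
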